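/- arXiv:2507.11314 — 3 statements merged into one kernel-verified Lean document; each statement's English description precedes it below -/
import Mathlib

section
/- Let f be a continuous, subhomogeneous, order-preserving map on a closed cone K. Then the maps f_0(x) := lim_{c→0} f(cx)/c and f_∞(x) := lim_{c→∞} f(cx)/c (limits taken in the one-point compactification K ∪ {∞}, which exist by monotonicity of c ↦ f(cx)/c) are homogeneous of degree 1 and order-preserving on K. Moreover, for any ψ in the dual cone K*, the function x ↦ ψ(f_0(x)) is lower semicontinuous and x ↦ ψ(f_∞(x)) is upper semicontinuous. -/
open Filter

/-- the scaling limits `f₀` and `f_∞` of a continuous, subhomogeneous,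
order-preserving map are homogeneous and order-preserving on `K`, and for any `ψ` in the
dual cone, `ψ ∘ f₀` is lower semicontinuous and `ψ ∘ f_∞` is upper semicontinuous. -/
theorem stmt4 {V : Type*} [NormedAddCommGroup V] [NormedSpace ℝ V] [FiniteDimensional ℝ V]
    (K : Set V) (hKcl : IsClosed K) (hKconv : Convex ℝ K)
    (hKcone : ∀ c : ℝ, 0 ≤ c → ∀ x ∈ K, c • x ∈ K)
    (hKsolid : (interior K).Nonempty)
    (f : V → V) (hmap : ∀ x ∈ K, f x ∈ K) (hcont : ContinuousOn f K)
    (hsub : ∀ x ∈ K, ∀ l : ℝ, 1 ≤ l → l • f x - f (l • x) ∈ K)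
    (hord : ∀ x ∈ K, ∀ y ∈ K, y - x ∈ K → f y - f x ∈ K)
    (ψ : V →ₗ[ℝ] ℝ) (hψ : ∀ x ∈ K, 0 ≤ ψ x)
    (f0 finf : V → V)
    (hf0 : ∀ x ∈ K, Tendsto (fun c : ℝ => c⁻¹ • f (c • x))
      (nhdsWithin 0 (Set.Ioi 0)) (nhds (f0 x)))
    (hfinf : ∀ x ∈ K, Tendsto (fun c : ℝ => c⁻¹ • f (c • x)) atTop (nhds (finf x))) :
    (∀ x ∈ K, f0 x ∈ K ∧ finf x ∈ K) ∧
    (∀ x ∈ K, ∀ l : ℝ, 0 ≤ l → f0 (l • x) = l • f0 x ∧ finf (l • x) = l • finf x) ∧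
    (∀ x ∈ K, ∀ y ∈ K, y - x ∈ K → (f0 y - f0 x ∈ K ∧ finf y - finf x ∈ K)) ∧
    LowerSemicontinuousOn (fun x => ψ (f0 x)) K ∧
    UpperSemicontinuousOn (fun x => ψ (finf x)) K := by
  classical
  have hψc : Continuous ψ := ψ.continuous_of_finiteDimensional
  have hK0 : (0:V) ∈ K := by
    obtain ⟨x₀, hx₀⟩ := hKsolid
    simpa using hKcone 0 le_rfl x₀ (interior_subset hx₀)
  -- the approximants lie in K
  have hgK : ∀ x ∈ K, ∀ c : ℝ, 0 < c → c⁻¹ • f (c • x) ∈ K := fun x hx c hc =>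
    hKcone c⁻¹ (by positivity) _ (hmap _ (hKcone c hc.le x hx))
  -- monotonicity of the approximants
  have hmono : ∀ x ∈ K, ∀ c c' : ℝ, 0 < c → c ≤ c' →
      c⁻¹ • f (c • x) - c'⁻¹ • f (c' • x) ∈ K := by
    intro x hx c c' hc hcc'
    have hc' : 0 < c' := hc.trans_le hcc'
    have hl : 1 ≤ c' / c := (one_le_div hc).2 hcc'
    have h1 := hsub (c • x) (hKcone c hc.le x hx) (c'/c) hl
    have h2 := hKcone c'⁻¹ (by positivity) _ h1
    rw [smul_sub] at h2
    have e2 : (c'/c) • (c • x) = c' • x := by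
      rw [smul_smul]; congr 1; field_simp
    have e1 : c'⁻¹ • (c'/c) • f (c • x) = c⁻¹ • f (c • x) := by
      rw [smul_smul]; congr 1; field_simp
    rwa [e2, e1] at h2
  have hmem : ∀ x ∈ K, f0 x ∈ K ∧ finf x ∈ K := by
    intro x hx
    constructor
    · refine hKcl.mem_of_tendsto (hf0 x hx) ?_
      filter_upwards [self_mem_nhdsWithin] with c (hc : c ∈ Set.Ioi 0)
      exact hgK x hx c hc
    · refine hKcl.mem_of_tendsto (hfinf x hx) ?_
      filter_upwards [eventually_gt_atTop 0] with c hc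
      exact hgK x hx c hc
  -- f 0 = 0
  have hfz : f 0 = 0 := by
    have h1 : Tendsto (fun c : ℝ => c • (c⁻¹ • f (c • (0:V))))
        (nhdsWithin 0 (Set.Ioi 0)) (nhds ((0:ℝ) • f0 0)) :=
      (tendsto_id.mono_left nhdsWithin_le_nhds).smul (hf0 0 hK0)
    rw [zero_smul] at h1
    have h2 : (fun c : ℝ => c • (c⁻¹ • f (c • (0:V)))) =ᶠ[nhdsWithin 0 (Set.Ioi 0)]
        (fun _ => f 0) := by
      filter_upwards [self_mem_nhdsWithin] with c (hc : c ∈ Set.Ioi 0)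
      rw [smul_zero, smul_inv_smul₀ (ne_of_gt hc)]
    exact (tendsto_nhds_unique (h1.congr' h2) tendsto_const_nhds).symm
  have hf0z : f0 0 = 0 := by
    have h1 := hf0 0 hK0
    have h2 : (fun c : ℝ => c⁻¹ • f (c • (0:V))) = fun _ => (0:V) := by
      funext c; rw [smul_zero, hfz, smul_zero]
    rw [h2] at h1
    exact tendsto_nhds_unique h1 tendsto_const_nhds
  have hfinfz : finf 0 = 0 := by
    have h1 := hfinf 0 hK0
    have h2 : (fun c : ℝ => c⁻¹ • f (c • (0:V))) = fun _ => (0:V) := by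
      funext c; rw [smul_zero, hfz, smul_zero]
    rw [h2] at h1
    exact tendsto_nhds_unique h1 tendsto_const_nhds
  -- homogeneity
  have hhom : ∀ x ∈ K, ∀ l : ℝ, 0 ≤ l →
      f0 (l • x) = l • f0 x ∧ finf (l • x) = l • finf x := by
    intro x hx l hl
    rcases eq_or_lt_of_le hl with rfl | hl
    · simp [hf0z, hfinfz]
    · have hlx : l • x ∈ K := hKcone l hl.le x hx
      have hl' : l ≠ 0 := ne_of_gt hl
      have heq : ∀ c : ℝ, c ∈ Set.Ioi (0:ℝ) →
          l • ((c*l)⁻¹ • f ((c*l) • x)) = c⁻¹ • f (c • l • x) := by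
        intro c hc
        have hc' : (c:ℝ) ≠ 0 := ne_of_gt hc
        rw [mul_smul, smul_smul]
        congr 1
        field_simp
      constructor
      · have h1 : Tendsto (fun c : ℝ => c * l) (nhdsWithin 0 (Set.Ioi 0))
            (nhdsWithin 0 (Set.Ioi 0)) := by
          apply tendsto_nhdsWithin_of_tendsto_nhds_of_eventually_within
          · simpa using ((tendsto_id (x := nhds (0:ℝ))).mono_left nhdsWithin_le_nhds).mul_const l
          · filter_upwards [self_mem_nhdsWithin] with c (hc : c ∈ Set.Ioi 0)
            exact mul_pos hc hl
        have h2 : Tendsto (fun c : ℝ => l • ((c*l)⁻¹ • f ((c*l) • x)))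
            (nhdsWithin 0 (Set.Ioi 0)) (nhds (l • f0 x)) :=
          ((hf0 x hx).comp h1).const_smul l
        have h3 : (fun c : ℝ => l • ((c*l)⁻¹ • f ((c*l) • x)))
            =ᶠ[nhdsWithin 0 (Set.Ioi 0)] (fun c => c⁻¹ • f (c • l • x)) := by
          filter_upwards [self_mem_nhdsWithin] with c hc using heq c hc
        exact tendsto_nhds_unique (hf0 _ hlx) (h2.congr' h3)
      · have h1 : Tendsto (fun c : ℝ => c * l) atTop atTop :=
          Tendsto.atTop_mul_const hl tendsto_id
        have h2 : Tendsto (fun c : ℝ => l • ((c*l)⁻¹ • f ((c*l) • x)))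
            atTop (nhds (l • finf x)) :=
          ((hfinf x hx).comp h1).const_smul l
        have h3 : (fun c : ℝ => l • ((c*l)⁻¹ • f ((c*l) • x)))
            =ᶠ[atTop] (fun c => c⁻¹ • f (c • l • x)) := by
          filter_upwards [eventually_gt_atTop 0] with c hc using heq c hc
        exact tendsto_nhds_unique (hfinf _ hlx) (h2.congr' h3)
  -- order preservation
  have hordlim : ∀ x ∈ K, ∀ y ∈ K, y - x ∈ K →
      f0 y - f0 x ∈ K ∧ finf y - finf x ∈ K := by
    intro x hx y hy hxy
    have hd : ∀ c : ℝ, 0 < c → c⁻¹ • f (c • y) - c⁻¹ • f (c • x) ∈ K := by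
      intro c hc
      have h1 : c • y - c • x ∈ K := by
        rw [← smul_sub]; exact hKcone c hc.le _ hxy
      have h2 := hord (c • x) (hKcone c hc.le x hx) (c • y) (hKcone c hc.le y hy) h1
      have h3 := hKcone c⁻¹ (by positivity) _ h2
      rwa [smul_sub] at h3
    constructor
    · refine hKcl.mem_of_tendsto ((hf0 y hy).sub (hf0 x hx)) ?_
      filter_upwards [self_mem_nhdsWithin] with c (hc : c ∈ Set.Ioi 0) using hd c hc
    · refine hKcl.mem_of_tendsto ((hfinf y hy).sub (hfinf x hx)) ?_
      filter_upwards [eventually_gt_atTop 0] with c hc using hd c hc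
  -- comparison of limits with approximants
  have h0ge : ∀ x ∈ K, ∀ c : ℝ, 0 < c → f0 x - c⁻¹ • f (c • x) ∈ K := by
    intro x hx c hc
    refine hKcl.mem_of_tendsto ((hf0 x hx).sub tendsto_const_nhds) ?_
    filter_upwards [self_mem_nhdsWithin,
      mem_nhdsWithin_of_mem_nhds (eventually_lt_nhds hc)] with c' (h1 : c' ∈ Set.Ioi 0) h2
    exact hmono x hx c' c h1 (le_of_lt h2)
  have hinfle : ∀ x ∈ K, ∀ c : ℝ, 0 < c → c⁻¹ • f (c • x) - finf x ∈ K := by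
    intro x hx c hc
    refine hKcl.mem_of_tendsto (tendsto_const_nhds.sub (hfinf x hx)) ?_
    filter_upwards [eventually_ge_atTop c] with c' hc'
    exact hmono x hx c c' hc hc'
  -- continuity of approximants on K
  have hcw : ∀ c : ℝ, 0 < c → ∀ x ∈ K,
      ContinuousWithinAt (fun y => ψ (c⁻¹ • f (c • y))) K x := by
    intro c hc x hx
    have h1 : ContinuousWithinAt f K (c • x) := hcont _ (hKcone c hc.le x hx)
    have h2 : ContinuousWithinAt (fun y : V => c • y) K x :=
      (continuous_const_smul c).continuousWithinAt
    have h3 : ContinuousWithinAt (fun y => f (c • y)) K x :=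
      h1.comp h2 (fun y hy => hKcone c hc.le y hy)
    exact ((hψc.comp (continuous_const_smul c⁻¹)).continuousAt).comp_continuousWithinAt h3
  have hLSC : LowerSemicontinuousOn (fun x => ψ (f0 x)) K := by
    intro x hx t ht
    have htend : Tendsto (fun c : ℝ => ψ (c⁻¹ • f (c • x)))
        (nhdsWithin 0 (Set.Ioi 0)) (nhds (ψ (f0 x))) :=
      hψc.continuousAt.tendsto.comp (hf0 x hx)
    obtain ⟨c, hc1, (hc2 : c ∈ Set.Ioi 0)⟩ :=
      ((htend.eventually (eventually_gt_nhds ht)).and self_mem_nhdsWithin).exists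
    have hev2 : ∀ᶠ y in nhdsWithin x K, t < ψ (c⁻¹ • f (c • y)) :=
      (hcw c hc2 x hx).eventually (eventually_gt_nhds hc1)
    filter_upwards [hev2, self_mem_nhdsWithin] with y hy1 hy2
    have h5 := hψ _ (h0ge y hy2 c hc2)
    rw [map_sub] at h5
    linarith
  have hUSC : UpperSemicontinuousOn (fun x => ψ (finf x)) K := by
    intro x hx t ht
    have htend : Tendsto (fun c : ℝ => ψ (c⁻¹ • f (c • x)))
        atTop (nhds (ψ (finf x))) :=
      hψc.continuousAt.tendsto.comp (hfinf x hx)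
    obtain ⟨c, hc1, hc2⟩ :=
      ((htend.eventually (eventually_lt_nhds ht)).and (eventually_gt_atTop 0)).exists
    have hev2 : ∀ᶠ y in nhdsWithin x K, ψ (c⁻¹ • f (c • y)) < t :=
      (hcw c hc2 x hx).eventually (eventually_lt_nhds hc1)
    filter_upwards [hev2, self_mem_nhdsWithin] with y hy1 hy2
    have h5 := hψ _ (hinfle y hy2 c hc2)
    rw [map_sub] at h5
    linarith
  exact ⟨hmem, hhom, hordlim, hLSC, hUSC⟩
end

section
/- Let f be a continuous, homogeneous, order-preserving map on a closed solid cone K with eigenvector x_f ∈ Int(K) satisfying f(x_f) = ρ_K(f) x_f. Then for any y ∈ Int(K), the operator norm of f with respect to the order-unit norm ‖·‖_y satisfies ‖f‖_y ≤ ρ_K(f) · M(x_f/y)/m(x_f/y), where M(u/v) = inf{β : u ≤_K βv} and m(u/v) = sup{α : αv ≤_K u}. -/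
/-!
Writing `≤` for the cone order, `z ≤ M(z/y) y` and `y ≤ m(x_f/y)⁻¹ x_f`, so
`z ≤ (M(z/y) / m(x_f/y)) x_f`. Monotonicity and homogeneity of `f` and `f x_f = ρ x_f` give
`f z ≤ ρ (M(z/y) / m(x_f/y)) x_f ≤ ρ (M(z/y) M(x_f/y) / m(x_f/y)) y`, i.e.
`M(f z/y) ≤ ρ (M(x_f/y) / m(x_f/y)) M(z/y)`. If `-y ∈ K` the cone is the whole space, every
`M(·/y)` is the junk value `0`, and both sides vanish.
-/

/-- The induced operator "norm" of a map over the unit ball of the cone `K`. -/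
noncomputable def opNormK {V : Type*} [NormedAddCommGroup V] (K : Set V) (f : V → V) : ℝ :=
  sSup ((fun x => ‖f x‖) '' {x | x ∈ K ∧ ‖x‖ ≤ 1})

/-- The cone spectral radius of a single map via the Gelfand formula. -/
noncomputable def coneSpecRad {V : Type*} [NormedAddCommGroup V] (K : Set V) (f : V → V) : ℝ :=
  Filter.limsup (fun m : ℕ => opNormK K (f^[m]) ^ ((m : ℝ))⁻¹) Filter.atTop

/-- `M(y/x) = inf { β : y ≤_K β x }`. -/
noncomputable def Mrel {V : Type*} [AddCommGroup V] [Module ℝ V] (K : Set V) (y x : V) : ℝ :=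
  sInf {β : ℝ | β • x - y ∈ K}

/-- `m(y/x) = sup { α : α x ≤_K y }`. -/
noncomputable def mrel {V : Type*} [AddCommGroup V] [Module ℝ V] (K : Set V) (y x : V) : ℝ :=
  sSup {α : ℝ | y - α • x ∈ K}

open Set Filter Topology

lemma coneSpecRad_nonneg {V : Type*} [NormedAddCommGroup V] (K : Set V) (f : V → V) :
    0 ≤ coneSpecRad K f := by
  rw [coneSpecRad, limsup_eq]
  refine Real.sInf_nonneg fun a ha => ?_
  obtain ⟨n, hn⟩ := ha.exists
  refine le_trans (Real.rpow_nonneg (Real.sSup_nonneg ?_) _) hn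
  rintro _ ⟨w, -, rfl⟩
  exact norm_nonneg _

lemma Mrel_univ {V : Type*} [AddCommGroup V] [Module ℝ V] (u y : V) : Mrel univ u y = 0 := by
  simp only [Mrel, mem_univ, ofPred_true]
  exact Real.sInf_of_not_bddBelow not_bddBelow_univ

def PointedCone.ofConvex {𝕜 E : Type*} [Field 𝕜] [LinearOrder 𝕜] [IsStrictOrderedRing 𝕜]
    [AddCommGroup E] [Module 𝕜 E] (K : Set E) (hconv : Convex 𝕜 K)
    (hsmul : ∀ c : 𝕜, 0 ≤ c → ∀ x ∈ K, c • x ∈ K) (hne : K.Nonempty) : PointedCone 𝕜 E where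
  carrier := K
  zero_mem' := by
    obtain ⟨x, hx⟩ := hne
    simpa using hsmul 0 le_rfl x hx
  add_mem' {x y} hx hy := by
    have hmid := hsmul 2 zero_le_two _
      (hconv hx hy (inv_nonneg.2 zero_le_two) (inv_nonneg.2 zero_le_two) (by norm_num))
    simpa only [smul_add, smul_smul, mul_inv_cancel₀ (two_ne_zero' 𝕜), one_smul] using hmid
  smul_mem' c x hx := hsmul c c.2 x hx

lemma exists_pos_sub_smul_mem {V : Type*} [AddCommGroup V] [Module ℝ V] [TopologicalSpace V]
    [IsTopologicalAddGroup V] [ContinuousSMul ℝ V] {u : V} {s : Set V} (hu : u ∈ interior s)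
    (v : V) : ∃ t : ℝ, 0 < t ∧ u - t • v ∈ s := by
  have hcont : Continuous fun t : ℝ => u - t • v := by fun_prop
  have hlim : Tendsto (fun t : ℝ => u - t • v) (𝓝[>] 0) (𝓝 u) :=
    (hcont.tendsto' 0 u (by simp)).mono_left nhdsWithin_le_nhds
  obtain ⟨t, hts, ht⟩ :=
    ((hlim.eventually (mem_interior_iff_mem_nhds.1 hu)).and self_mem_nhdsWithin).exists
  exact ⟨t, ht, hts⟩

namespace PointedCone

section Algebraic

variable {V : Type*} [AddCommGroup V] [Module ℝ V] {C : PointedCone ℝ V} {u v w y : V}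
  {a b β : ℝ}

lemma smul_sub_mem_trans (ha : 0 ≤ a) (h₁ : a • v - u ∈ C) (h₂ : b • w - v ∈ C) :
    (a * b) • w - u ∈ C := by
  convert C.add_mem (C.smul_mem ha h₂) h₁ using 1
  rw [smul_sub, mul_smul]
  abel

lemma nonneg_of_smul_sub_mem (hy : -y ∉ C) (hu : u ∈ C) (h : β • y - u ∈ C) : 0 ≤ β := by
  by_contra! hβ
  have hβy : β • y ∈ C := by simpa using C.add_mem h hu
  apply hy
  simpa [smul_smul, inv_mul_cancel₀ hβ.ne] using
    C.smul_mem (inv_nonneg.2 (neg_nonneg.2 hβ.le)) hβy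

lemma Mrel_le_of_smul_sub_mem (hy : -y ∉ C) (hu : u ∈ C) (h : β • y - u ∈ C) : Mrel C u y ≤ β :=
  csInf_le ⟨0, fun _ hγ => nonneg_of_smul_sub_mem hy hu hγ⟩ h

end Algebraic

section Topological

variable {V : Type*} [AddCommGroup V] [Module ℝ V] [TopologicalSpace V] [IsTopologicalAddGroup V]
  [ContinuousSMul ℝ V] {C : PointedCone ℝ V} {u y : V}

lemma eq_top_of_neg_mem (hy : y ∈ interior (C : Set V)) (hneg : -y ∈ C) : C = ⊤ := by
  refine eq_top_iff.2 fun v _ => ?_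
  obtain ⟨t, ht, hyv⟩ := exists_pos_sub_smul_mem hy (-v)
  have htv : t • v ∈ C := by simpa using C.add_mem hyv hneg
  simpa [inv_smul_smul₀ ht.ne'] using C.smul_mem (inv_nonneg.2 ht.le) htv

lemma exists_smul_sub_mem (hy : y ∈ interior (C : Set V)) (u : V) : ∃ β : ℝ, β • y - u ∈ C := by
  obtain ⟨t, ht, hyu⟩ := exists_pos_sub_smul_mem hy u
  refine ⟨t⁻¹, ?_⟩
  simpa [smul_sub, inv_smul_smul₀ ht.ne'] using C.smul_mem (inv_nonneg.2 ht.le) hyu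

lemma mrel_pos (hy : y ∈ interior (C : Set V)) (hneg : -y ∉ C) (hu : u ∈ interior (C : Set V)) :
    0 < mrel C u y := by
  obtain ⟨ε, hε, huε⟩ := exists_pos_sub_smul_mem hu y
  obtain ⟨β, hβ⟩ := exists_smul_sub_mem hy u
  have hbdd : BddAbove {α : ℝ | u - α • y ∈ (C : Set V)} := by
    refine ⟨β, fun α hα => sub_nonneg.1 (nonneg_of_smul_sub_mem hneg C.zero_mem ?_)⟩
    convert C.add_mem hβ hα using 1
    module
  exact hε.trans_le (le_csSup hbdd huε)

variable (hC : IsClosed (C : Set V))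
include hC

/-- `M(u/y)` is attained; when `{β | β • y - u ∈ C}` is unbounded below it is all of `ℝ`, so the
junk value `0` is attained too. -/
lemma Mrel_smul_sub_mem (hy : y ∈ interior (C : Set V)) (u : V) : Mrel C u y • y - u ∈ C := by
  obtain ⟨β, hβ⟩ := exists_smul_sub_mem hy u
  rw [Mrel]
  by_cases hbdd : BddBelow {β : ℝ | β • y - u ∈ (C : Set V)}
  · exact (hC.preimage (f := fun β : ℝ => β • y - u) (by fun_prop)).csInf_mem ⟨β, hβ⟩ hbdd
  · obtain ⟨γ, hγ, hγ0⟩ := not_bddBelow_iff.1 hbdd 0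
    rw [Real.sInf_of_not_bddBelow hbdd]
    convert C.add_mem (C.smul_mem (neg_nonneg.2 hγ0.le) (interior_subset hy)) hγ using 1
    module

lemma Mrel_nonneg (hy : y ∈ interior (C : Set V)) (hneg : -y ∉ C) (hu : u ∈ C) :
    0 ≤ Mrel C u y :=
  nonneg_of_smul_sub_mem hneg hu (Mrel_smul_sub_mem hC hy u)

/-- `m(u/y)` is attained; when `{α | u - α • y ∈ C}` is unbounded above, the junk value `0` is
attained because `u ∈ C`. -/
lemma sub_mrel_smul_mem (hu : u ∈ C) : u - mrel C u y • y ∈ C := by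
  rw [mrel]
  by_cases hbdd : BddAbove {α : ℝ | u - α • y ∈ (C : Set V)}
  · exact (hC.preimage (f := fun α : ℝ => u - α • y) (by fun_prop)).csSup_mem
      ⟨0, by simpa using hu⟩ hbdd
  · rw [Real.sSup_of_not_bddAbove hbdd]
    simpa using hu

lemma Mrel_map_le {f : V → V} (hmap : ∀ x ∈ C, f x ∈ C)
    (hhom : ∀ x ∈ C, ∀ c : ℝ, 0 ≤ c → f (c • x) = c • f x)
    (hord : ∀ x ∈ C, ∀ y ∈ C, y - x ∈ C → f y - f x ∈ C)
    (hy : y ∈ interior (C : Set V)) (hneg : -y ∉ C) {x z : V} {ρ : ℝ} (hρ : 0 ≤ ρ)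
    (hx : x ∈ C) (heig : f x = ρ • x) (hmx : 0 < mrel C x y) (hz : z ∈ C) :
    Mrel C (f z) y ≤ ρ * (Mrel C x y / mrel C x y) * Mrel C z y := by
  set c := Mrel C z y / mrel C x y
  have hc : 0 ≤ c := div_nonneg (Mrel_nonneg hC hy hneg hz) hmx.le
  have hyx : (mrel C x y)⁻¹ • x - y ∈ C := by
    simpa [smul_sub, inv_smul_smul₀ hmx.ne'] using
      C.smul_mem (inv_nonneg.2 hmx.le) (sub_mrel_smul_mem (y := y) hC hx)
  have hzx : c • x - z ∈ C :=
    smul_sub_mem_trans (Mrel_nonneg hC hy hneg hz) (Mrel_smul_sub_mem hC hy z) hyx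
  have hfzx : (c * ρ) • x - f z ∈ C := by
    simpa [hhom x hx c hc, heig, smul_smul] using hord z hz _ (C.smul_mem hc hx) hzx
  calc Mrel C (f z) y ≤ c * ρ * Mrel C x y :=
        Mrel_le_of_smul_sub_mem hneg (hmap z hz)
          (smul_sub_mem_trans (mul_nonneg hc hρ) hfzx (Mrel_smul_sub_mem hC hy x))
    _ = ρ * (Mrel C x y / mrel C x y) * Mrel C z y := by
        simp only [c]
        ring

end Topological

end PointedCone

open PointedCone in
theorem stmt11_general {V : Type*} [NormedAddCommGroup V] [NormedSpace ℝ V]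
    (K : Set V) (hKcl : IsClosed K) (hKconv : Convex ℝ K)
    (hKcone : ∀ c : ℝ, 0 ≤ c → ∀ x ∈ K, c • x ∈ K)
    (f : V → V) (hmap : ∀ x ∈ K, f x ∈ K)
    (hhom : ∀ x ∈ K, ∀ c : ℝ, 0 ≤ c → f (c • x) = c • f x)
    (hord : ∀ x ∈ K, ∀ y ∈ K, y - x ∈ K → f y - f x ∈ K)
    (xf : V) (hxf : xf ∈ interior K) (heig : f xf = coneSpecRad K f • xf)
    (y : V) (hy : y ∈ interior K) :
    sSup ((fun z => Mrel K (f z) y / Mrel K z y) '' (K \ {0})) ≤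
      coneSpecRad K f * (Mrel K xf y / mrel K xf y) := by
  set C := ofConvex K hKconv hKcone ⟨y, interior_subset hy⟩
  have hρ := coneSpecRad_nonneg K f
  by_cases hneg : -y ∈ C
  · have hK : K = univ := congrArg SetLike.coe (eq_top_of_neg_mem (C := C) hy hneg)
    subst hK
    rw [Mrel_univ, zero_div, mul_zero]
    refine Real.sSup_le ?_ le_rfl
    rintro _ ⟨z, -, rfl⟩
    simp [Mrel_univ]
  · have hmx : 0 < mrel K xf y := mrel_pos (C := C) hy hneg hxf
    have hbound : 0 ≤ coneSpecRad K f * (Mrel K xf y / mrel K xf y) :=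
      mul_nonneg hρ (div_nonneg (Mrel_nonneg (C := C) hKcl hy hneg (interior_subset hxf)) hmx.le)
    refine Real.sSup_le ?_ hbound
    rintro _ ⟨z, ⟨hz, -⟩, rfl⟩
    exact div_le_of_le_mul₀ (Mrel_nonneg (C := C) hKcl hy hneg hz) hbound
      (Mrel_map_le (C := C) hKcl hmap hhom hord hy hneg hρ (interior_subset hxf) heig hmx hz)

/-- bound on the `y`-order-unit operator norm of `f` in terms of the spectral
radius and the comparability constants of the dominant eigenvector with `y`. -/
theorem stmt11 {V : Type*} [NormedAddCommGroup V] [NormedSpace ℝ V] [FiniteDimensional ℝ V]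
    (K : Set V) (hKcl : IsClosed K) (hKconv : Convex ℝ K)
    (hKcone : ∀ c : ℝ, 0 ≤ c → ∀ x ∈ K, c • x ∈ K)
    (hKsolid : (interior K).Nonempty)
    (f : V → V) (hmap : ∀ x ∈ K, f x ∈ K) (hcont : ContinuousOn f K)
    (hhom : ∀ x ∈ K, ∀ c : ℝ, 0 ≤ c → f (c • x) = c • f x)
    (hord : ∀ x ∈ K, ∀ y ∈ K, y - x ∈ K → f y - f x ∈ K)
    (xf : V) (hxf : xf ∈ interior K) (heig : f xf = coneSpecRad K f • xf)
    (y : V) (hy : y ∈ interior K) :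
    sSup ((fun z => Mrel K (f z) y / Mrel K z y) '' (K \ {0})) ≤
      coneSpecRad K f * (Mrel K xf y / mrel K xf y) :=
  stmt11_general K hKcl hKconv hKcone f hmap hhom hord xf hxf heig y hy
end

section
/- Let f be a continuous, subhomogeneous, order-preserving map on a closed solid cone K, ψ ∈ Int(K*), and Ω_c = {x ∈ K : ψ(x) = c} with c > 0. If there exists x ∈ Ω_c with f(x) ≥_K αx, then the slice spectral radius ρ^c_K(f) := max{λ : ∃x ∈ Ω_c, f(x) = λx} satisfies ρ^c_K(f) ≥ α; moreover ρ^c_K(f) = sup_{x∈Ω_c} m(f(x)/x). Dually, if there exists x ∈ Int(K) ∩ Ω_c with f(x) ≤_K βx, then ρ^c_K(f) ≤ β, and ρ^c_K(f) = inf_{x∈Int(K)∩Ω_c} M(f(x)/x). -/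
/-!
In place of Brouwer's theorem we use a contraction argument. For `u` in the interior of `K` and
`f ≤ R • u` on the slice, the map `x ↦ c • g x / ψ (g x)` with `g = f + ε • u` contracts Hilbert's
projective metric on the slice by the factor `R / (R + ε)`, so its iterates converge to an interior
eigenvector `x_ε` of `g`, with eigenvalue `λ_ε`. A limit point `(p, λ)` as `ε → 0` is an eigenpair
of `f`, and `f x_ε ≤ λ_ε • x_ε` at the interior points `x_ε`. Everything then follows from the
comparison principle: if `f x ≥ α • x` on the slice and `f z ≤ β • z` at an interior point `z` of
the slice, then `α ≤ β`. Hence `λ` bounds every lower eigen-bound from above and is the infimum of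
the interior upper eigen-bounds, and `ρ = λ` is attained.
-/

/-- The spectral radius of `f` on the slice `{x ∈ K : ψ x = c}`: the largest eigenvalue
attained by an eigenvector on the slice. -/
noncomputable def sliceSpecRad {V : Type*} [AddCommGroup V] [Module ℝ V]
    (K : Set V) (ψ : V →ₗ[ℝ] ℝ) (c : ℝ) (f : V → V) : ℝ :=
  sSup {l : ℝ | ∃ x, x ∈ K ∧ ψ x = c ∧ f x = l • x}

open Filter Topology

namespace PointedCone

variable {V : Type*} [NormedAddCommGroup V] [NormedSpace ℝ V] {C : PointedCone ℝ V}
  {ψ : V →ₗ[ℝ] ℝ}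

def ofConvex_s18 {K : Set V} (hne : K.Nonempty) (hconv : Convex ℝ K)
    (hcone : ∀ c : ℝ, 0 ≤ c → ∀ x ∈ K, c • x ∈ K) : PointedCone ℝ V :=
  .ofConeComb K hne fun x hx y hy a ha b hb => by
    convert hconv (hcone (2 * a) (by positivity) x hx) (hcone (2 * b) (by positivity) y hy)
      (by norm_num : (0 : ℝ) ≤ 1 / 2) (by norm_num : (0 : ℝ) ≤ 1 / 2) (by norm_num) using 1
    module

lemma add_mem_interior {x y : V} (hx : x ∈ interior (C : Set V)) (hy : y ∈ C) :
    x + y ∈ interior (C : Set V) :=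
  interior_mono (by rintro _ ⟨z, hz, rfl⟩; exact C.add_mem hz hy)
    ((Homeomorph.addRight y).isOpenMap.image_interior_subset _ ⟨x, hx, rfl⟩)

lemma smul_mem_interior {t : ℝ} (ht : 0 < t) {x : V} (hx : x ∈ interior (C : Set V)) :
    t • x ∈ interior (C : Set V) :=
  interior_mono (by rintro _ ⟨z, hz, rfl⟩; exact C.smul_mem ht.le hz)
    ((Homeomorph.smulOfNeZero t ht.ne').isOpenMap.image_interior_subset _ ⟨x, hx, rfl⟩)

lemma exists_smul_sub_mem_of_isBounded {z : V} (hz : z ∈ interior (C : Set V)) {S : Set V}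
    (hS : Bornology.IsBounded S) : ∃ t : ℝ, 0 < t ∧ ∀ v ∈ S, t • z - v ∈ C := by
  obtain ⟨r, hr, hball⟩ := Metric.mem_nhds_iff.1 (mem_interior_iff_mem_nhds.1 hz)
  obtain ⟨M, hM⟩ := hS.subset_closedBall 0
  set t := (|M| + 1) / r
  have ht : 0 < t := by positivity
  refine ⟨t, ht, fun v hv => ?_⟩
  have hvM : ‖v‖ ≤ |M| := (mem_closedBall_zero_iff.1 (hM hv)).trans (le_abs_self M)
  have hmem : z - t⁻¹ • v ∈ Metric.ball z r := by
    rw [Metric.mem_ball, dist_eq_norm, sub_sub_cancel_left, norm_neg, norm_smul,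
      Real.norm_eq_abs, abs_inv, abs_of_pos ht, inv_mul_lt_iff₀ ht]
    calc ‖v‖ ≤ |M| := hvM
      _ < |M| + 1 := lt_add_one _
      _ = t * r := by simp only [t, div_mul_cancel₀ _ hr.ne']
  simpa [smul_sub, smul_smul, ht.ne'] using C.smul_mem ht.le (hball hmem)

lemma exists_mem_interior_eq [Nontrivial V] (hint : (interior (C : Set V)).Nonempty)
    (hψ : ∀ x ∈ C, x ≠ 0 → 0 < ψ x) {c : ℝ} (hc : 0 < c) :
    ∃ u ∈ interior (C : Set V), ψ u = c := by
  obtain ⟨u, hu⟩ := hint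
  have hu0 : u ≠ 0 := by
    -- otherwise both `w` and `-w` lie in `C` for small `w ≠ 0`
    rintro rfl
    have hC : (C : Set V) ∈ 𝓝 0 := mem_interior_iff_mem_nhds.1 hu
    have hnhds : ∀ᶠ w in 𝓝[≠] (0 : V), w ∈ C ∧ -w ∈ C :=
      nhdsWithin_le_nhds (Filter.Eventually.and hC
        ((continuous_neg.tendsto' (0 : V) 0 neg_zero).eventually hC))
    obtain ⟨w, ⟨hw, hnw⟩, hw0⟩ := (hnhds.and self_mem_nhdsWithin).exists
    have := hψ (-w) hnw (neg_ne_zero.2 hw0)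
    linarith [hψ w hw hw0, map_neg ψ w]
  have hψu : 0 < ψ u := hψ u (interior_subset hu) hu0
  refine ⟨(c / ψ u) • u, smul_mem_interior (by positivity) hu, ?_⟩
  rw [map_smul, smul_eq_mul, div_mul_cancel₀ c hψu.ne']

/-- `m(y/x)` of the paper. -/
noncomputable def lowerRatio (C : PointedCone ℝ V) (y x : V) : ℝ := sSup {a : ℝ | y - a • x ∈ C}

/-- `M(y/x)` of the paper. -/
noncomputable def upperRatio (C : PointedCone ℝ V) (y x : V) : ℝ := sInf {b : ℝ | b • x - y ∈ C}

lemma apply_nonneg_of_pos (hψ : ∀ x ∈ C, x ≠ 0 → 0 < ψ x) : ∀ x ∈ C, 0 ≤ ψ x := fun x hx =>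
  (eq_or_ne x 0).elim (fun h => by simp [h]) fun h => (hψ x hx h).le

lemma div_le_of_smul_sub_mem (hψ : ∀ x ∈ C, 0 ≤ ψ x) {x y : V} {b : ℝ} (hx : 0 < ψ x)
    (h : b • x - y ∈ C) : ψ y / ψ x ≤ b := by
  have := hψ _ h
  rw [map_sub, map_smul, smul_eq_mul] at this
  rw [div_le_iff₀ hx]
  linarith

lemma le_div_of_sub_smul_mem (hψ : ∀ x ∈ C, 0 ≤ ψ x) {x y : V} {a : ℝ} (hx : 0 < ψ x)
    (h : y - a • x ∈ C) : a ≤ ψ y / ψ x := by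
  have := hψ _ h
  rw [map_sub, map_smul, smul_eq_mul] at this
  rw [le_div_iff₀ hx]
  linarith

lemma upperRatio_le (hψ : ∀ x ∈ C, 0 ≤ ψ x) {x y : V} {b : ℝ} (hx : 0 < ψ x)
    (h : b • x - y ∈ C) : upperRatio C y x ≤ b :=
  csInf_le ⟨ψ y / ψ x, fun _ hb => div_le_of_smul_sub_mem hψ hx hb⟩ h

lemma upperRatio_smul_sub_mem (hC : IsClosed (C : Set V)) (hψ : ∀ x ∈ C, 0 ≤ ψ x) {x : V}
    (hx : x ∈ interior (C : Set V)) (hψx : 0 < ψ x) (y : V) : upperRatio C y x • x - y ∈ C := by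
  obtain ⟨t, -, ht⟩ := exists_smul_sub_mem_of_isBounded hx (Bornology.isBounded_singleton (x := y))
  exact (hC.preimage (by fun_prop : Continuous fun b : ℝ => b • x - y)).csInf_mem
    ⟨t, ht y rfl⟩ ⟨ψ y / ψ x, fun _ hb => div_le_of_smul_sub_mem hψ hψx hb⟩

lemma le_lowerRatio (hψ : ∀ x ∈ C, 0 ≤ ψ x) {x y : V} {a : ℝ} (hx : 0 < ψ x)
    (h : y - a • x ∈ C) : a ≤ lowerRatio C y x :=
  le_csSup ⟨ψ y / ψ x, fun _ ha => le_div_of_sub_smul_mem hψ hx ha⟩ h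

lemma sub_lowerRatio_smul_mem (hC : IsClosed (C : Set V)) (hψ : ∀ x ∈ C, 0 ≤ ψ x) {x y : V}
    (hx : 0 < ψ x) (hy : y ∈ C) : y - lowerRatio C y x • x ∈ C :=
  (hC.preimage (by fun_prop : Continuous fun a : ℝ => y - a • x)).csSup_mem
    ⟨0, by simpa using hy⟩ ⟨ψ y / ψ x, fun _ ha => le_div_of_sub_smul_mem hψ hx ha⟩

structure IsOrderPreservingSubhomogeneous (C : PointedCone ℝ V) (f : V → V) : Prop where
  mapsTo : ∀ x ∈ C, f x ∈ C
  subhomogeneous : ∀ x ∈ C, ∀ l : ℝ, 1 ≤ l → l • f x - f (l • x) ∈ C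
  orderPreserving : ∀ x ∈ C, ∀ y ∈ C, y - x ∈ C → f y - f x ∈ C

namespace IsOrderPreservingSubhomogeneous

variable {f : V → V}

lemma smul_sub_mem (hf : IsOrderPreservingSubhomogeneous C f) {x z : V} (hx : x ∈ C)
    (hz : z ∈ C) {t : ℝ} (ht : 1 ≤ t) (h : t • z - x ∈ C) : t • f z - f x ∈ C := by
  simpa using C.add_mem (hf.subhomogeneous z hz t ht)
    (hf.orderPreserving x hx (t • z) (C.smul_mem (by linarith) hz) h)

/-- With `t = M(x/z) ≥ 1`: `α • x ≤ f x ≤ f (t • z) ≤ t • f z ≤ (t * β) • z`, so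
`t ≤ t * β / α` by minimality of `t`. -/
lemma le_of_sub_smul_mem_of_smul_sub_mem (hf : IsOrderPreservingSubhomogeneous C f)
    (hC : IsClosed (C : Set V)) (hψ : ∀ x ∈ C, 0 ≤ ψ x) {c : ℝ} (hc : 0 < c) {x z : V}
    {α β : ℝ} (hx : x ∈ C) (hψx : ψ x = c) (hα : f x - α • x ∈ C)
    (hz : z ∈ interior (C : Set V)) (hψz : ψ z = c) (hβ : β • z - f z ∈ C) : α ≤ β := by
  have hzC : z ∈ C := interior_subset hz
  have hψz0 : 0 < ψ z := hψz ▸ hc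
  set t := upperRatio C x z
  have htz : t • z - x ∈ C := upperRatio_smul_sub_mem hC hψ hz hψz0 x
  have ht1 : 1 ≤ t := by
    simpa [hψx, hψz, hc.ne'] using div_le_of_smul_sub_mem hψ hψz0 htz
  rcases le_or_gt α 0 with hα0 | hα0
  · have := div_le_of_smul_sub_mem hψ hψz0 hβ
    have := div_nonneg (hψ _ (hf.mapsTo z hzC)) hψz0.le
    linarith
  have hchain : (t * β) • z - α • x ∈ C := by
    have := C.add_mem (C.add_mem (C.smul_mem (show 0 ≤ t by linarith) hβ)
      (hf.smul_sub_mem hx hzC ht1 htz)) hα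
    convert this using 1
    module
  have : t ≤ t * β / α := upperRatio_le hψ hψz0 (by
    convert C.smul_mem (inv_pos.2 hα0).le hchain using 1
    match_scalars <;> field_simp)
  rw [le_div_iff₀ hα0] at this
  nlinarith

end IsOrderPreservingSubhomogeneous

structure IsCollatzWielandtValue (C : PointedCone ℝ V) (ψ : V →ₗ[ℝ] ℝ) (c : ℝ) (f : V → V)
    (l : ℝ) : Prop where
  exists_eigenvector : ∃ p ∈ C, ψ p = c ∧ f p = l • p
  exists_smul_sub_mem : ∀ η > 0, ∃ z ∈ interior (C : Set V), ψ z = c ∧ (l + η) • z - f z ∈ C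

namespace IsCollatzWielandtValue

variable {f : V → V} {c l : ℝ}

lemma le_of_sub_smul_mem (hl : IsCollatzWielandtValue C ψ c f l)
    (hf : IsOrderPreservingSubhomogeneous C f) (hC : IsClosed (C : Set V))
    (hψ : ∀ x ∈ C, 0 ≤ ψ x) (hc : 0 < c) {x : V} {α : ℝ} (hx : x ∈ C) (hψx : ψ x = c)
    (hα : f x - α • x ∈ C) : α ≤ l :=
  le_of_forall_pos_le_add fun η hη =>
    let ⟨_, hz, hψz, hzη⟩ := hl.exists_smul_sub_mem η hη
    hf.le_of_sub_smul_mem_of_smul_sub_mem hC hψ hc hx hψx hα hz hψz hzη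

lemma le_of_smul_sub_mem (hl : IsCollatzWielandtValue C ψ c f l)
    (hf : IsOrderPreservingSubhomogeneous C f) (hC : IsClosed (C : Set V))
    (hψ : ∀ x ∈ C, 0 ≤ ψ x) (hc : 0 < c) {z : V} {β : ℝ} (hz : z ∈ interior (C : Set V))
    (hψz : ψ z = c) (hβ : β • z - f z ∈ C) : l ≤ β := by
  obtain ⟨p, hp, hψp, hfp⟩ := hl.exists_eigenvector
  exact hf.le_of_sub_smul_mem_of_smul_sub_mem hC hψ hc hp hψp (by simp [hfp]) hz hψz hβ

lemma sliceSpecRad_eq (hl : IsCollatzWielandtValue C ψ c f l)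
    (hf : IsOrderPreservingSubhomogeneous C f) (hC : IsClosed (C : Set V))
    (hψ : ∀ x ∈ C, 0 ≤ ψ x) (hc : 0 < c) : sliceSpecRad C ψ c f = l :=
  IsGreatest.csSup_eq ⟨hl.exists_eigenvector, fun _ ⟨_, hx, hψx, hfx⟩ =>
    hl.le_of_sub_smul_mem hf hC hψ hc hx hψx (by simp [hfx])⟩

lemma sSup_lowerRatio_eq (hl : IsCollatzWielandtValue C ψ c f l)
    (hf : IsOrderPreservingSubhomogeneous C f) (hC : IsClosed (C : Set V))
    (hψ : ∀ x ∈ C, 0 ≤ ψ x) (hc : 0 < c) :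
    sSup ((fun x => lowerRatio C (f x) x) '' {x | x ∈ C ∧ ψ x = c}) = l := by
  have hle : ∀ x ∈ C, ψ x = c → lowerRatio C (f x) x ≤ l := fun x hx hψx =>
    hl.le_of_sub_smul_mem hf hC hψ hc hx hψx
      (sub_lowerRatio_smul_mem hC hψ (hψx ▸ hc) (hf.mapsTo x hx))
  obtain ⟨p, hp, hψp, hfp⟩ := hl.exists_eigenvector
  refine IsGreatest.csSup_eq ⟨⟨p, ⟨hp, hψp⟩, (hle p hp hψp).antisymm ?_⟩, ?_⟩
  · exact le_lowerRatio hψ (hψp ▸ hc) (by simp [hfp])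
  · rintro _ ⟨x, ⟨hx, hψx⟩, rfl⟩
    exact hle x hx hψx

lemma sInf_upperRatio_eq (hl : IsCollatzWielandtValue C ψ c f l)
    (hf : IsOrderPreservingSubhomogeneous C f) (hC : IsClosed (C : Set V))
    (hψ : ∀ x ∈ C, 0 ≤ ψ x) (hc : 0 < c) :
    sInf ((fun x => upperRatio C (f x) x) '' {x | x ∈ interior (C : Set V) ∧ ψ x = c}) = l := by
  have hle : ∀ z ∈ interior (C : Set V), ψ z = c → l ≤ upperRatio C (f z) z := fun z hz hψz =>
    hl.le_of_smul_sub_mem hf hC hψ hc hz hψz (upperRatio_smul_sub_mem hC hψ hz (hψz ▸ hc) _)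
  have hlower : l ∈ lowerBounds
      ((fun x => upperRatio C (f x) x) '' {x | x ∈ interior (C : Set V) ∧ ψ x = c}) := by
    rintro _ ⟨z, ⟨hz, hψz⟩, rfl⟩
    exact hle z hz hψz
  obtain ⟨z, hz, hψz, -⟩ := hl.exists_smul_sub_mem 1 one_pos
  refine le_antisymm (le_of_forall_pos_le_add fun η hη => ?_)
    (le_csInf ⟨_, z, ⟨hz, hψz⟩, rfl⟩ hlower)
  obtain ⟨z, hz, hψz, hzη⟩ := hl.exists_smul_sub_mem η hη
  exact (csInf_le ⟨l, hlower⟩ ⟨z, ⟨hz, hψz⟩, rfl⟩).trans (upperRatio_le hψ (hψz ▸ hc) hzη)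

end IsCollatzWielandtValue

/-- `M(p/q) M(q/p) ≤ r`, with witnesses: Hilbert's projective distance between `p` and `q` is at
most `log r`. -/
def HilbertComparable (C : PointedCone ℝ V) (r : ℝ) (p q : V) : Prop :=
  ∃ a b : ℝ, a • q - p ∈ C ∧ b • p - q ∈ C ∧ a * b ≤ r

namespace HilbertComparable

variable {r : ℝ} {p q : V}

lemma smul (h : HilbertComparable C r p q) {s t : ℝ} (hs : 0 < s) (ht : 0 < t) :
    HilbertComparable C r (s • p) (t • q) := by
  obtain ⟨a, b, ha, hb, hab⟩ := h
  refine ⟨a * s / t, b * t / s, ?_, ?_, ?_⟩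
  · convert C.smul_mem hs.le ha using 1
    match_scalars <;> field_simp
  · convert C.smul_mem ht.le hb using 1
    match_scalars <;> field_simp
  · calc a * s / t * (b * t / s) = a * b := by field_simp
      _ ≤ r := hab

lemma norm_sub_le {δ : ℝ} (hδ : 0 < δ) (hδC : ∀ x ∈ C, δ * ‖x‖ ≤ ψ x) {c : ℝ} (hc : 0 < c)
    (hp : p ∈ C) (hψp : ψ p = c) (hψq : ψ q = c) (h : HilbertComparable C r p q) :
    ‖p - q‖ ≤ 2 * c * (r - 1) / δ := by
  obtain ⟨a, b, ha, hb, hab⟩ := h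
  have hψ : ∀ x ∈ C, 0 ≤ ψ x := fun x hx => (by positivity : 0 ≤ δ * ‖x‖).trans (hδC x hx)
  have ha1 : 1 ≤ a := by
    simpa [hψp, hψq, hc.ne'] using div_le_of_smul_sub_mem hψ (hψq ▸ hc) ha
  have hb1 : 1 ≤ b := by
    simpa [hψp, hψq, hc.ne'] using div_le_of_smul_sub_mem hψ (hψp ▸ hc) hb
  have hbpq : δ * ‖b • p - q‖ ≤ (b - 1) * c := by
    have := hδC _ hb
    rwa [map_sub, map_smul, smul_eq_mul, hψp, hψq, ← sub_one_mul] at this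
  have hpn : δ * ‖p‖ ≤ c := hψp ▸ hδC p hp
  have hbr : b - 1 ≤ r - 1 := by nlinarith
  have hsplit : ‖(b • p - q) - (b - 1) • p‖ ≤ ‖b • p - q‖ + (b - 1) * ‖p‖ :=
    (_root_.norm_sub_le _ _).trans_eq (by rw [norm_smul, Real.norm_of_nonneg (by linarith)])
  rw [le_div_iff₀ hδ, show p - q = (b • p - q) - (b - 1) • p by module]
  nlinarith

end HilbertComparable

namespace IsOrderPreservingSubhomogeneous

variable {f : V → V}

lemma smul_add_smul_sub_mem (hf : IsOrderPreservingSubhomogeneous C f) {p q u : V}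
    {R ε l : ℝ} (hR : 0 ≤ R) (hε : 0 < ε) (hp : p ∈ C) (hq : q ∈ C) (hRq : R • u - f q ∈ C)
    (hl : 1 ≤ l) (h : l • q - p ∈ C) :
    (1 + R / (R + ε) * (l - 1)) • (f q + ε • u) - (f p + ε • u) ∈ C := by
  -- with `k = R / (R + ε)`, the surplus `k (l - 1) ε • u` pays for
  -- `(1 - k) (l - 1) • f q ≤ (1 - k) (l - 1) R • u`, since `k ε = (1 - k) R`
  have hRε : 0 < R + ε := by linarith
  convert C.add_mem (hf.smul_sub_mem hp hq hl h)
    (C.smul_mem (by positivity : 0 ≤ (l - 1) * (ε / (R + ε))) hRq) using 1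
  match_scalars <;> field_simp <;> ring

lemma hilbertComparable_add_smul (hf : IsOrderPreservingSubhomogeneous C f) {c : ℝ}
    (hc : 0 < c) (hψ : ∀ x ∈ C, 0 ≤ ψ x) {p q u : V} {r R ε : ℝ} (hR : 0 ≤ R) (hε : 0 < ε)
    (hp : p ∈ C) (hψp : ψ p = c) (hq : q ∈ C) (hψq : ψ q = c)
    (hRp : R • u - f p ∈ C) (hRq : R • u - f q ∈ C) (h : HilbertComparable C r p q) :
    HilbertComparable C (1 + R / (R + ε) * (r - 1)) (f p + ε • u) (f q + ε • u) := by
  obtain ⟨a, b, ha, hb, hab⟩ := h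
  have ha1 : 1 ≤ a := by
    simpa [hψp, hψq, hc.ne'] using div_le_of_smul_sub_mem hψ (hψq ▸ hc) ha
  have hb1 : 1 ≤ b := by
    simpa [hψp, hψq, hc.ne'] using div_le_of_smul_sub_mem hψ (hψp ▸ hc) hb
  refine ⟨_, _, hf.smul_add_smul_sub_mem hR hε hp hq hRq ha1 ha,
    hf.smul_add_smul_sub_mem hR hε hq hp hRp hb1 hb, ?_⟩
  have hk0 : 0 ≤ R / (R + ε) := by positivity
  have hk1 : R / (R + ε) ≤ 1 := div_le_one_of_le₀ (by linarith) (by linarith)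
  nlinarith [mul_nonneg (mul_nonneg hk0 (sub_nonneg.2 hk1))
    (mul_nonneg (sub_nonneg.2 ha1) (sub_nonneg.2 hb1))]

lemma hilbertComparable_add_smul_self (hf : IsOrderPreservingSubhomogeneous C f) {u : V}
    {R ε : ℝ} (hε : 0 < ε) (hu : u ∈ C) (hRu : R • u - f u ∈ C) :
    HilbertComparable C ((R + ε) / ε) u (f u + ε • u) := by
  refine ⟨ε⁻¹, R + ε, ?_, ?_, (inv_mul_eq_div _ _).le⟩
  · convert C.smul_mem (inv_pos.2 hε).le (hf.mapsTo u hu) using 1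
    rw [smul_add, smul_smul, inv_mul_cancel₀ hε.ne', one_smul, add_sub_cancel_right]
  · convert hRu using 1
    module

end IsOrderPreservingSubhomogeneous

section FiniteDimensional

variable [FiniteDimensional ℝ V]

lemma exists_pos_mul_norm_le (hC : IsClosed (C : Set V)) (hψ : ∀ x ∈ C, x ≠ 0 → 0 < ψ x) :
    ∃ δ > 0, ∀ x ∈ C, δ * ‖x‖ ≤ ψ x := by
  obtain ⟨δ, hδ, hδψ⟩ := ((isCompact_sphere (0 : V) 1).inter_left hC).exists_forall_le'
    ψ.continuous_of_finiteDimensional.continuousOn (a := 0)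
    fun x hx => hψ x hx.1 (by rintro rfl; simp at hx)
  refine ⟨δ, hδ, fun x hx => ?_⟩
  rcases eq_or_ne x 0 with rfl | hx0
  · simp
  have hn : 0 < ‖x‖ := norm_pos_iff.2 hx0
  have := hδψ (‖x‖⁻¹ • x) ⟨C.smul_mem (by positivity) hx, by simp [norm_smul, hn.ne']⟩
  rwa [map_smul, smul_eq_mul, ← div_eq_inv_mul, le_div_iff₀ hn] at this

lemma isClosed_slice (hC : IsClosed (C : Set V)) (c : ℝ) : IsClosed {x | x ∈ C ∧ ψ x = c} :=
  hC.inter (isClosed_eq ψ.continuous_of_finiteDimensional continuous_const)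

lemma isCompact_slice (hC : IsClosed (C : Set V)) (hψ : ∀ x ∈ C, x ≠ 0 → 0 < ψ x) (c : ℝ) :
    IsCompact {x | x ∈ C ∧ ψ x = c} := by
  obtain ⟨δ, hδ, hδC⟩ := exists_pos_mul_norm_le hC hψ
  refine Metric.isCompact_of_isClosed_isBounded (isClosed_slice hC c)
    ((Metric.isBounded_closedBall (x := 0) (r := c / δ)).subset fun x hx => ?_)
  rw [mem_closedBall_zero_iff, le_div_iff₀ hδ]
  linarith [hδC x hx.1, hx.2]

/-- Iterating a self-map of the slice that contracts Hilbert's metric gives a Cauchy sequence,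
because Hilbert-close points of the slice are norm-close. -/
lemma exists_fixedPoint_of_hilbertComparable (hC : IsClosed (C : Set V)) {δ : ℝ} (hδ : 0 < δ)
    (hδC : ∀ x ∈ C, δ * ‖x‖ ≤ ψ x) {c : ℝ} (hc : 0 < c) {T : V → V}
    (hTC : ∀ x ∈ C, ψ x = c → T x ∈ C ∧ ψ (T x) = c)
    (hTcont : ContinuousOn T {x | x ∈ C ∧ ψ x = c}) {k : ℝ} (hk : k < 1)
    (hT : ∀ p ∈ C, ψ p = c → ∀ q ∈ C, ψ q = c → ∀ r, HilbertComparable C r p q →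
      HilbertComparable C (1 + k * (r - 1)) (T p) (T q))
    {u : V} (hu : u ∈ C) (hψu : ψ u = c) {r : ℝ} (hr : HilbertComparable C r u (T u)) :
    ∃ p ∈ C, ψ p = c ∧ T p = p := by
  obtain ⟨x, hx0, hxs⟩ : ∃ x : ℕ → V, x 0 = u ∧ ∀ n, x (n + 1) = T (x n) :=
    ⟨fun n => T^[n] u, rfl, fun n => Function.iterate_succ_apply' T n u⟩
  have hx : ∀ n, x n ∈ C ∧ ψ (x n) = c := by
    intro n
    induction n with
    | zero => exact hx0 ▸ ⟨hu, hψu⟩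
    | succ n ih => exact hxs n ▸ hTC _ ih.1 ih.2
  have hcomp : ∀ n, HilbertComparable C (1 + k ^ n * (r - 1)) (x n) (x (n + 1)) := by
    intro n
    induction n with
    | zero => simpa [hx0, hxs] using hr
    | succ n ih =>
      have := hT _ (hx n).1 (hx n).2 _ (hx (n + 1)).1 (hx (n + 1)).2 _ ih
      rw [← hxs, ← hxs] at this
      convert this using 2
      ring
  have hdist : ∀ n, dist (x n) (x (n + 1)) ≤ 2 * c * (r - 1) / δ * k ^ n := fun n => by
    rw [dist_eq_norm]
    convert (hcomp n).norm_sub_le hδ hδC hc (hx n).1 (hx n).2 (hx (n + 1)).2 using 1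
    ring
  obtain ⟨p, hp⟩ := cauchySeq_tendsto_of_complete (cauchySeq_of_le_geometric k _ hk hdist)
  have hpΩ : p ∈ {x | x ∈ C ∧ ψ x = c} :=
    (isClosed_slice hC c).mem_of_tendsto hp (Eventually.of_forall hx)
  refine ⟨p, hpΩ.1, hpΩ.2, tendsto_nhds_unique ?_ (hp.comp (tendsto_add_atTop_nat 1))⟩
  have := (hTcont p hpΩ).tendsto.comp (tendsto_nhdsWithin_iff.2 ⟨hp, Eventually.of_forall hx⟩)
  simpa [Function.comp_def, hxs] using this

namespace IsOrderPreservingSubhomogeneous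

variable {f : V → V}

lemma exists_eigenvector_add_smul (hf : IsOrderPreservingSubhomogeneous C f)
    (hcont : ContinuousOn f C) (hC : IsClosed (C : Set V)) (hψ : ∀ x ∈ C, x ≠ 0 → 0 < ψ x)
    {c : ℝ} (hc : 0 < c) {u : V} (hu : u ∈ interior (C : Set V)) (hψu : ψ u = c) {ε : ℝ}
    (hε : 0 < ε) : ∃ x ∈ interior (C : Set V), ψ x = c ∧ ∃ l : ℝ, f x + ε • u = l • x := by
  have hψ0 := apply_nonneg_of_pos hψ
  have huC : u ∈ C := interior_subset hu
  obtain ⟨δ, hδ, hδC⟩ := exists_pos_mul_norm_le hC hψ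
  have hΩ := isCompact_slice hC hψ c
  obtain ⟨R, hR0, hR⟩ := exists_smul_sub_mem_of_isBounded hu
    (hΩ.image_of_continuousOn (hcont.mono fun _ h => h.1)).isBounded
  have hRf : ∀ y ∈ C, ψ y = c → R • u - f y ∈ C := fun y hy hψy => hR _ ⟨y, ⟨hy, hψy⟩, rfl⟩
  set g : V → V := fun x => f x + ε • u
  have hψg : ∀ x ∈ C, 0 < ψ (g x) := fun x hx => by
    simp only [g, map_add, map_smul, smul_eq_mul, hψu]
    nlinarith [hψ0 _ (hf.mapsTo x hx)]
  have hgC : ∀ x ∈ C, g x ∈ C := fun x hx => C.add_mem (hf.mapsTo x hx) (C.smul_mem hε.le huC)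
  have hgcont : ContinuousOn g {x | x ∈ C ∧ ψ x = c} :=
    (hcont.mono fun _ h => h.1).add continuousOn_const
  obtain ⟨p, hpC, hψp, hTp⟩ := exists_fixedPoint_of_hilbertComparable hC hδ hδC hc
    (T := fun x => (c / ψ (g x)) • g x) (k := R / (R + ε))
    (fun x hx _ => ⟨C.smul_mem (div_pos hc (hψg x hx)).le (hgC x hx), by
      rw [map_smul, smul_eq_mul, div_mul_cancel₀ c (hψg x hx).ne']⟩)
    ((continuousOn_const.div (ψ.continuous_of_finiteDimensional.comp_continuousOn hgcont)
      fun x hx => (hψg x hx.1).ne').smul hgcont)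
    ((div_lt_one (by linarith)).2 (by linarith))
    (fun p hp hψp q hq hψq r h =>
      (hf.hilbertComparable_add_smul hc hψ0 hR0.le hε hp hψp hq hψq (hRf p hp hψp)
        (hRf q hq hψq) h).smul (div_pos hc (hψg p hp)) (div_pos hc (hψg q hq)))
    huC hψu (by simpa only [one_smul] using ((hf.hilbertComparable_add_smul_self hε huC (hRf u huC hψu)).smul
      one_pos (div_pos hc (hψg u huC))))
  have hψgp : 0 < ψ (g p) := hψg p hpC
  refine ⟨p, ?_, hψp, ψ (g p) / c, ?_⟩
  · rw [← hTp]
    refine smul_mem_interior (div_pos hc hψgp) ?_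
    rw [show g p = ε • u + f p from add_comm _ _]
    exact add_mem_interior (smul_mem_interior hε hu) (hf.mapsTo p hpC)
  · calc f p + ε • u = (ψ (g p) / c * (c / ψ (g p))) • g p := by
          rw [div_mul_div_cancel₀ hc.ne', div_self hψgp.ne', one_smul]
      _ = (ψ (g p) / c) • p := by rw [← smul_smul, hTp]

theorem exists_isCollatzWielandtValue (hf : IsOrderPreservingSubhomogeneous C f)
    (hcont : ContinuousOn f C) (hC : IsClosed (C : Set V)) (hψ : ∀ x ∈ C, x ≠ 0 → 0 < ψ x)
    {c : ℝ} (hc : 0 < c) {u : V} (hu : u ∈ interior (C : Set V)) (hψu : ψ u = c) :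
    ∃ l, IsCollatzWielandtValue C ψ c f l := by
  choose X hXint hψX L hL using fun n : ℕ =>
    hf.exists_eigenvector_add_smul hcont hC hψ hc hu hψu (Nat.one_div_pos_of_nat (n := n))
  have hXC : ∀ n, X n ∈ C := fun n => interior_subset (hXint n)
  have hLeq : ∀ n, L n = ψ (f (X n)) / c + 1 / ((n : ℝ) + 1) := fun n => by
    have := congrArg ψ (hL n)
    simp only [map_add, map_smul, smul_eq_mul, hψX, hψu] at this
    rw [div_add' _ _ _ hc.ne', eq_div_iff hc.ne']
    linarith
  obtain ⟨p, hpΩ, φ, hφ, hXlim⟩ :=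
    (isCompact_slice hC hψ c).tendsto_subseq fun n => ⟨hXC n, hψX n⟩
  have hfXlim : Tendsto (fun n => f (X (φ n))) atTop (𝓝 (f p)) :=
    (hcont p hpΩ.1).tendsto.comp (tendsto_nhdsWithin_iff.2 ⟨hXlim, .of_forall fun n => hXC _⟩)
  have hεlim : Tendsto (fun n => 1 / ((φ n : ℝ) + 1)) atTop (𝓝 0) :=
    tendsto_one_div_add_atTop_nhds_zero_nat.comp hφ.tendsto_atTop
  have hLlim : Tendsto (fun n => L (φ n)) atTop (𝓝 (ψ (f p) / c)) := by
    have := (((ψ.continuous_of_finiteDimensional.tendsto _).comp hfXlim).div_const c).add hεlim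
    rw [add_zero] at this
    exact this.congr fun n => (hLeq _).symm
  set l := ψ (f p) / c
  refine ⟨l, ⟨p, hpΩ.1, hpΩ.2, tendsto_nhds_unique hfXlim ?_⟩, fun η hη => ?_⟩
  · have := (hLlim.smul hXlim).sub (hεlim.smul (tendsto_const_nhds (x := u)))
    rw [zero_smul, sub_zero] at this
    refine this.congr fun n => ?_
    rw [Function.comp_apply, ← hL]
    abel
  · obtain ⟨n, hn⟩ := (hLlim.eventually (gt_mem_nhds (lt_add_of_pos_right l hη))).exists
    refine ⟨X (φ n), hXint _, hψX _, ?_⟩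
    have : (l + η) • X (φ n) - f (X (φ n))
        = (l + η - L (φ n)) • X (φ n) + (1 / ((φ n : ℝ) + 1)) • u := by
      rw [sub_smul, ← hL]
      abel
    rw [this]
    exact C.add_mem (C.smul_mem (by linarith) (hXC _))
      (C.smul_mem Nat.one_div_pos_of_nat.le (interior_subset hu))

end IsOrderPreservingSubhomogeneous

end FiniteDimensional

end PointedCone

/-- Collatz–Wielandt characterization of the slice spectral radius of a
continuous, subhomogeneous, order-preserving map. -/
theorem stmt18 {V : Type*} [NormedAddCommGroup V] [NormedSpace ℝ V] [FiniteDimensional ℝ V]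
    (K : Set V) (hKcl : IsClosed K) (hKconv : Convex ℝ K)
    (hKcone : ∀ c : ℝ, 0 ≤ c → ∀ x ∈ K, c • x ∈ K)
    (hKsolid : (interior K).Nonempty)
    (f : V → V) (hmap : ∀ x ∈ K, f x ∈ K) (hcont : ContinuousOn f K)
    (hsub : ∀ x ∈ K, ∀ l : ℝ, 1 ≤ l → l • f x - f (l • x) ∈ K)
    (hord : ∀ x ∈ K, ∀ y ∈ K, y - x ∈ K → f y - f x ∈ K)
    (ψ : V →ₗ[ℝ] ℝ) (hψ : ∀ x ∈ K, x ≠ 0 → 0 < ψ x)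
    (c : ℝ) (hc : 0 < c) :
    (∀ α : ℝ, (∃ x, x ∈ K ∧ ψ x = c ∧ f x - α • x ∈ K) → α ≤ sliceSpecRad K ψ c f) ∧
    sliceSpecRad K ψ c f =
      sSup ((fun x => sSup {a : ℝ | f x - a • x ∈ K}) '' {x | x ∈ K ∧ ψ x = c}) ∧
    (∀ β : ℝ, (∃ x, x ∈ interior K ∧ ψ x = c ∧ β • x - f x ∈ K) →
      sliceSpecRad K ψ c f ≤ β) ∧
    sliceSpecRad K ψ c f =
      sInf ((fun x => sInf {b : ℝ | b • x - f x ∈ K}) ''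
        {x | x ∈ interior K ∧ ψ x = c}) := by
  rcases subsingleton_or_nontrivial V with hV | hV
  · -- the slice is empty and every side is the junk value `sSup ∅ = sInf ∅ = 0`
    have hΩ : ∀ x : V, ψ x ≠ c := fun x => by simpa [Subsingleton.elim x 0] using hc.ne
    simp [sliceSpecRad, hΩ]
  set C := PointedCone.ofConvex_s18 (hKsolid.mono interior_subset) hKconv hKcone
  have hf : C.IsOrderPreservingSubhomogeneous f := ⟨hmap, hsub, hord⟩
  have hψ0 := C.apply_nonneg_of_pos hψ
  obtain ⟨u, hu, hψu⟩ := C.exists_mem_interior_eq hKsolid hψ hc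
  obtain ⟨l, hl⟩ := hf.exists_isCollatzWielandtValue hcont hKcl hψ hc hu hψu
  have hρ : sliceSpecRad K ψ c f = l := hl.sliceSpecRad_eq hf hKcl hψ0 hc
  refine ⟨?_, ?_, ?_, ?_⟩ <;> rw [hρ]
  · rintro α ⟨x, hx, hψx, hα⟩
    exact hl.le_of_sub_smul_mem hf hKcl hψ0 hc hx hψx hα
  · exact (hl.sSup_lowerRatio_eq hf hKcl hψ0 hc).symm
  · rintro β ⟨z, hz, hψz, hβ⟩
    exact hl.le_of_smul_sub_mem hf hKcl hψ0 hc hz hψz hβ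
  · exact (hl.sInf_upperRatio_eq hf hKcl hψ0 hc).symm
end
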